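/- arXiv:1609.05515 — 2 statements merged into one kernel-verified Lean document; each statement's English description precedes it below -/
import Mathlib

section
/- In ℝ³, with Y_{k,1}^n(x) = r^{n−k} C_{n−k}^{k+1/2}(x₃/r) ρ^k T_k(x₂/ρ) and Y_{k,2}^n(x) = r^{n−k} C_{n−k}^{k+1/2}(x₃/r) ρ^{k−1} x₁ U_{k−1}(x₂/ρ), where ρ = √(x₁²+x₂²), r = ‖x‖, one has for 1 ≤ k ≤ n: ∂₂ Y_{k,1}^n(x) = ((n+k)(n+k−1)/(2(2k−1))) Y_{k−1,1}^{n−1}(x) − (k+1/2) Y_{k+1,1}^{n−1}(x), with the convention Y_{k,1}^m = 0 for k > m. -/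
/-!
Both factors of `Y_{k,1}^n` are polynomials in disguise: with `z = x₂ + i x₁` one has
`ρ^k T_k(x₂/ρ) = Re z^k`, and `r^m C_m^λ(x₃/r) = P_m^λ(x₃, r²)` for an explicit
polynomial `P_m^λ(c, q)`. Hence `∂₂ Y_{k,1}^n = 2x₂ ∂_q P · Re z^k + k P · Re z^{k-1}`,
and the Chebyshev recurrence `2x₂ Re z^k = Re z^{k+1} + ρ² Re z^{k-1}` splits this into two terms.
The one with `Re z^{k+1}` is `-(k+1/2) Y_{k+1,1}^{n-1}` because `∂_q P_m^λ = -λ P_{m-2}^{λ+1}`;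
the one with `Re z^{k-1}` carries `k P + (q - x₃²) ∂_q P`, which a coefficientwise
computation identifies with `((n+k)(n+k-1)/(2(2k-1))) P_m^{λ-1}`, the factor of
`Y_{k-1,1}^{n-1}`.
-/

open scoped BigOperators
open MeasureTheory

noncomputable def poch (a : ℝ) (n : ℕ) : ℝ := ∏ i ∈ Finset.range n, (a + i)

noncomputable def gegenbauer (n : ℕ) (lam t : ℝ) : ℝ :=
  ∑ k ∈ Finset.range (n / 2 + 1),
    (-1 : ℝ) ^ k * poch lam (n - k) /
      ((Nat.factorial k : ℝ) * (Nat.factorial (n - 2 * k) : ℝ)) * (2 * t) ^ (n - 2 * k)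

noncomputable def jacobi (j : ℕ) (a b t : ℝ) : ℝ :=
  poch (a + 1) j / (Nat.factorial j : ℝ) *
    ∑ k ∈ Finset.range (j + 1),
      poch (-(j : ℝ)) k * poch ((j : ℝ) + a + b + 1) k /
        (poch (a + 1) k * (Nat.factorial k : ℝ)) * ((1 - t) / 2) ^ k

noncomputable def pd {d : ℕ} (i : Fin d) (f : EuclideanSpace ℝ (Fin d) → ℝ)
    (x : EuclideanSpace ℝ (Fin d)) : ℝ :=
  fderiv ℝ f x (EuclideanSpace.single i 1)

noncomputable def lap {d : ℕ} (f : EuclideanSpace ℝ (Fin d) → ℝ)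
    (x : EuclideanSpace ℝ (Fin d)) : ℝ :=
  ∑ i, pd i (pd i f) x

noncomputable def Dang {d : ℕ} (i j : Fin d) (f : EuclideanSpace ℝ (Fin d) → ℝ)
    (x : EuclideanSpace ℝ (Fin d)) : ℝ :=
  x i * pd j f x - x j * pd i f x

noncomputable def lapS {d : ℕ} (f : EuclideanSpace ℝ (Fin d) → ℝ)
    (x : EuclideanSpace ℝ (Fin d)) : ℝ :=
  ∑ p ∈ Finset.univ.filter (fun p : Fin d × Fin d => p.1 < p.2),
    Dang p.1 p.2 (Dang p.1 p.2 f) x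

noncomputable def chebT (k : ℕ) (t : ℝ) : ℝ := (Polynomial.Chebyshev.T ℝ (k : ℤ)).eval t

noncomputable def rho (x : EuclideanSpace ℝ (Fin 3)) : ℝ := Real.sqrt ((x 0) ^ 2 + (x 1) ^ 2)

/-- `Y_{k,1}^m(x) = r^{m-k} C_{m-k}^{k+1/2}(x₃/r) ρ^k T_k(x₂/ρ)`, with the convention
`Y_{k,1}^m = 0` for `k > m`. -/
noncomputable def Y31 (k m : ℕ) (x : EuclideanSpace ℝ (Fin 3)) : ℝ :=
  if k ≤ m then
    ‖x‖ ^ (m - k) * gegenbauer (m - k) ((k : ℝ) + 1 / 2) (x 2 / ‖x‖) *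
      rho x ^ k * chebT k (x 1 / rho x)
  else 0

theorem poch_succ_right (a : ℝ) (n : ℕ) : poch a (n + 1) = poch a n * (a + n) :=
  Finset.prod_range_succ _ _

theorem poch_succ_left (a : ℝ) (n : ℕ) : poch a (n + 1) = a * poch (a + 1) n := by
  rw [poch, Finset.prod_range_succ', poch, Nat.cast_zero, add_zero, mul_comm]
  push_cast
  exact congrArg (a * ·) (Finset.prod_congr rfl fun i _ => by ring)

theorem poch_sub_one_mul (a : ℝ) (n : ℕ) :
    poch (a - 1) n * (a - 1 + n) = (a - 1) * poch a n := by
  rw [← poch_succ_right, poch_succ_left, sub_add_cancel]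

noncomputable def gegenbauerCoeff (m : ℕ) (lam : ℝ) (j : ℕ) : ℝ :=
  (-1 : ℝ) ^ j * poch lam (m - j) / ((Nat.factorial j : ℝ) * (Nat.factorial (m - 2 * j) : ℝ))

noncomputable def gegenbauerHomog (m : ℕ) (lam c q : ℝ) : ℝ :=
  ∑ j ∈ Finset.range (m / 2 + 1), gegenbauerCoeff m lam j * (2 * c) ^ (m - 2 * j) * q ^ j

noncomputable def gegenbauerHomogDeriv (m : ℕ) (lam c q : ℝ) : ℝ :=
  ∑ j ∈ Finset.range (m / 2 + 1),
    gegenbauerCoeff m lam j * (2 * c) ^ (m - 2 * j) * (j * q ^ (j - 1))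

theorem gegenbauerHomog_mul_sq (m : ℕ) (lam r t : ℝ) :
    gegenbauerHomog m lam (r * t) (r ^ 2) = r ^ m * gegenbauer m lam t := by
  rw [gegenbauerHomog, gegenbauer, Finset.mul_sum]
  refine Finset.sum_congr rfl fun j hj => ?_
  have hm : r ^ m = r ^ (m - 2 * j) * (r ^ 2) ^ j := by
    rw [← pow_mul, ← pow_add]; congr 1; have := Finset.mem_range.mp hj; omega
  rw [gegenbauerCoeff, hm, mul_pow]
  ring

theorem hasDerivAt_gegenbauerHomog (m : ℕ) (lam c q : ℝ) :
    HasDerivAt (gegenbauerHomog m lam c) (gegenbauerHomogDeriv m lam c q) q := by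
  unfold gegenbauerHomog gegenbauerHomogDeriv
  refine HasDerivAt.fun_sum fun j _ => ?_
  exact (hasDerivAt_pow j q).const_mul _

theorem gegenbauerHomogDeriv_of_le_one {m : ℕ} (hm : m ≤ 1) (lam c q : ℝ) :
    gegenbauerHomogDeriv m lam c q = 0 := by
  simp [gegenbauerHomogDeriv, show m / 2 = 0 by omega]

theorem gegenbauerHomogDeriv_add_two (m : ℕ) (lam c q : ℝ) :
    gegenbauerHomogDeriv (m + 2) lam c q = -lam * gegenbauerHomog m (lam + 1) c q := by
  rw [gegenbauerHomogDeriv, gegenbauerHomog, show (m + 2) / 2 = m / 2 + 1 by omega,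
    Finset.sum_range_succ', Finset.mul_sum]
  simp only [CharP.cast_eq_zero, zero_mul, mul_zero, add_zero]
  refine Finset.sum_congr rfl fun j hj => ?_
  have hj : 2 * j ≤ m := by have := Finset.mem_range.mp hj; omega
  rw [gegenbauerCoeff, gegenbauerCoeff, show m + 2 - (j + 1) = m - j + 1 by omega,
    show m + 2 - 2 * (j + 1) = m - 2 * j by omega, Nat.add_sub_cancel, Nat.factorial_succ,
    poch_succ_left]
  push_cast
  field_simp
  ring

theorem gegenbauerCoeff_succ {m j : ℕ} (h : 2 * (j + 1) ≤ m) (lam : ℝ) :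
    (j + 1) * (lam + m - j - 1) * gegenbauerCoeff m lam (j + 1)
      = -((m - 2 * j) * (m - 2 * j - 1)) * gegenbauerCoeff m lam j := by
  obtain ⟨e, rfl⟩ : ∃ e, m = 2 * j + e + 2 := ⟨m - 2 * j - 2, by omega⟩
  rw [gegenbauerCoeff, gegenbauerCoeff, show 2 * j + e + 2 - j = j + e + 1 + 1 by omega,
    show 2 * j + e + 2 - (j + 1) = j + e + 1 by omega,
    show 2 * j + e + 2 - 2 * j = e + 1 + 1 by omega, show 2 * j + e + 2 - 2 * (j + 1) = e by omega,
    poch_succ_right lam (j + e + 1), Nat.factorial_succ, Nat.factorial_succ, Nat.factorial_succ]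
  push_cast
  field_simp
  ring

theorem gegenbauerCoeff_sub_one {m j : ℕ} (h : j ≤ m) (lam : ℝ) :
    (lam + m - j - 1) * gegenbauerCoeff m (lam - 1) j = (lam - 1) * gegenbauerCoeff m lam j := by
  have hpoch := poch_sub_one_mul lam (m - j)
  rw [Nat.cast_sub h] at hpoch
  rw [gegenbauerCoeff, gegenbauerCoeff]
  linear_combination (-1) ^ j / ((j.factorial : ℝ) * ((m - 2 * j).factorial : ℝ)) * hpoch

theorem gegenbauerCoeff_lowering {m j : ℕ} (h : j ≤ m) {lam : ℝ} (hlam : 1 < lam) :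
    (lam - 1 / 2 + j + (m - 2 * j) * (m - 2 * j - 1) / (4 * (lam + m - j - 1)))
        * gegenbauerCoeff m lam j
      = (m + 2 * lam - 1) * (m + 2 * lam - 2) / (4 * (lam - 1))
        * gegenbauerCoeff m (lam - 1) j := by
  have hjm : (j : ℝ) ≤ m := by exact_mod_cast h
  have hD : lam + m - j - 1 ≠ 0 := by linarith
  have hlam' : lam - 1 ≠ 0 := by linarith
  have hsub : gegenbauerCoeff m (lam - 1) j
      = (lam - 1) * gegenbauerCoeff m lam j / (lam + m - j - 1) :=
    eq_div_of_mul_eq hD (by rw [mul_comm]; exact gegenbauerCoeff_sub_one h lam)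
  rw [hsub]
  field_simp
  ring

theorem gegenbauerHomog_euler (m : ℕ) (a lam c q : ℝ) :
    a * gegenbauerHomog m lam c q + q * gegenbauerHomogDeriv m lam c q
      = ∑ j ∈ Finset.range (m / 2 + 1),
          (a + j) * gegenbauerCoeff m lam j * ((2 * c) ^ (m - 2 * j) * q ^ j) := by
  rw [gegenbauerHomog, gegenbauerHomogDeriv, Finset.mul_sum, Finset.mul_sum,
    ← Finset.sum_add_distrib]
  refine Finset.sum_congr rfl fun j _ => ?_
  rcases j with _ | j
  · simp [mul_assoc]
  · simp only [Nat.add_sub_cancel, pow_succ]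
    push_cast
    ring

theorem sq_mul_gegenbauerHomogDeriv (m : ℕ) {lam : ℝ} (hlam : 0 < lam) (c q : ℝ) :
    c ^ 2 * gegenbauerHomogDeriv m lam c q
      = -∑ j ∈ Finset.range (m / 2 + 1),
          (m - 2 * j) * (m - 2 * j - 1) / (4 * (lam + m - j - 1)) * gegenbauerCoeff m lam j
            * ((2 * c) ^ (m - 2 * j) * q ^ j) := by
  have htop : ((m : ℝ) - 2 * (m / 2 : ℕ)) * ((m : ℝ) - 2 * (m / 2 : ℕ) - 1) = 0 := by
    rcases Nat.even_or_odd' m with ⟨i, rfl | rfl⟩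
    · simp [show 2 * i / 2 = i by omega]
    · simp [show (2 * i + 1) / 2 = i by omega]
  rw [gegenbauerHomogDeriv, Finset.mul_sum, Finset.sum_range_succ', Finset.sum_range_succ, htop,
    zero_div, zero_mul, zero_mul, add_zero, ← Finset.sum_neg_distrib]
  simp only [CharP.cast_eq_zero, zero_mul, mul_zero, add_zero]
  refine Finset.sum_congr rfl fun j hj => ?_
  have hj : 2 * (j + 1) ≤ m := by have := Finset.mem_range.mp hj; omega
  have hD : lam + m - j - 1 ≠ 0 := by
    have : (j : ℝ) + 1 ≤ m := by exact_mod_cast (by omega : j + 1 ≤ m)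
    linarith
  rw [show m - 2 * j = m - 2 * (j + 1) + 2 by omega, Nat.add_sub_cancel, pow_add]
  push_cast
  field_simp
  linear_combination
    4 * c ^ 2 * (2 * c) ^ (m - 2 * (j + 1)) * q ^ j * gegenbauerCoeff_succ hj lam

theorem gegenbauerHomog_lowering (m : ℕ) {lam : ℝ} (hlam : 1 < lam) (c q : ℝ) :
    (lam - 1 / 2) * gegenbauerHomog m lam c q + (q - c ^ 2) * gegenbauerHomogDeriv m lam c q
      = (m + 2 * lam - 1) * (m + 2 * lam - 2) / (4 * (lam - 1))
        * gegenbauerHomog m (lam - 1) c q := by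
  rw [sub_mul q, ← add_sub_assoc, gegenbauerHomog_euler,
    sq_mul_gegenbauerHomogDeriv m (by linarith), sub_neg_eq_add, ← Finset.sum_add_distrib,
    gegenbauerHomog, Finset.mul_sum]
  refine Finset.sum_congr rfl fun j hj => ?_
  have hj : j ≤ m := by have := Finset.mem_range.mp hj; omega
  linear_combination (2 * c) ^ (m - 2 * j) * q ^ j * gegenbauerCoeff_lowering hj hlam

section Chebyshev

open Complex

theorem re_pow_eq_norm_pow_mul_chebT (z : ℂ) (k : ℕ) :
    (z ^ k).re = ‖z‖ ^ k * chebT k (z.re / ‖z‖) := by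
  rcases eq_or_ne z 0 with rfl | hz
  · cases k <;> simp [chebT]
  rw [← cos_arg hz, chebT, Polynomial.Chebyshev.T_real_cos]
  conv_lhs => rw [← norm_mul_exp_arg_mul_I z, mul_pow, ← exp_nat_mul, ← ofReal_pow]
  rw [re_ofReal_mul, ← mul_assoc, ← ofReal_natCast, ← ofReal_mul, exp_ofReal_mul_I_re]
  push_cast
  ring

noncomputable def chebyshevHomog (k : ℕ) (a b : ℝ) : ℝ := (((b : ℂ) + a * I) ^ k).re

theorem sqrt_pow_mul_chebT (k : ℕ) (a b : ℝ) :
    √(a ^ 2 + b ^ 2) ^ k * chebT k (b / √(a ^ 2 + b ^ 2)) = chebyshevHomog k a b := by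
  have hnorm : ‖(b : ℂ) + a * I‖ = √(a ^ 2 + b ^ 2) := by
    rw [norm_eq_sqrt_sq_add_sq, add_comm]
    simp
  rw [chebyshevHomog, re_pow_eq_norm_pow_mul_chebT, hnorm]
  simp

theorem hasDerivAt_chebyshevHomog (k : ℕ) (a b : ℝ) :
    HasDerivAt (chebyshevHomog (k + 1) a) ((k + 1) * chebyshevHomog k a b) b := by
  have h : HasDerivAt (fun w : ℂ => (w + a * I) ^ (k + 1))
      ((k + 1 : ℕ) * ((b : ℂ) + a * I) ^ k) b := by
    simpa using ((hasDerivAt_id (b : ℂ)).add_const (a * I)).fun_pow (k + 1)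
  unfold chebyshevHomog
  simpa using h.real_of_complex

theorem chebyshevHomog_add_two (k : ℕ) (a b : ℝ) :
    chebyshevHomog (k + 2) a b + (a ^ 2 + b ^ 2) * chebyshevHomog k a b
      = 2 * b * chebyshevHomog (k + 1) a b := by
  have h : ((b : ℂ) + a * I) ^ (k + 2) + ((a ^ 2 + b ^ 2 : ℝ) : ℂ) * ((b : ℂ) + a * I) ^ k
      = ((2 * b : ℝ) : ℂ) * ((b : ℂ) + a * I) ^ (k + 1) := by
    push_cast
    ring_nf
    rw [I_sq]
    ring
  have := congrArg re h
  rwa [add_re, re_ofReal_mul, re_ofReal_mul] at this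

end Chebyshev

theorem pd_eq_of_hasDerivAt {d : ℕ} {i : Fin d} {F : EuclideanSpace ℝ (Fin d) → ℝ}
    {x : EuclideanSpace ℝ (Fin d)} (hF : DifferentiableAt ℝ F x) {G : ℝ → ℝ} {g' : ℝ}
    (hFG : ∀ t, F (x + t • EuclideanSpace.single i 1) = G (x i + t))
    (hG : HasDerivAt G g' (x i)) : pd i F x = g' := by
  have hline : HasLineDerivAt ℝ F g' x (EuclideanSpace.single i 1) := by
    have := HasDerivAt.comp_const_add (x i) 0 (by rwa [add_zero])
    simpa only [HasLineDerivAt, hFG] using this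
  exact (hF.hasFDerivAt.hasLineDerivAt _).unique hline

noncomputable def Y31Poly (k m : ℕ) (y : EuclideanSpace ℝ (Fin 3)) : ℝ :=
  gegenbauerHomog m (k + 1 / 2) (y 2) (y 0 ^ 2 + y 1 ^ 2 + y 2 ^ 2)
    * chebyshevHomog k (y 0) (y 1)

theorem Y31_add_eq_Y31Poly (k m : ℕ) : Y31 k (k + m) = Y31Poly k m := by
  funext y
  have hnorm : ‖y‖ ^ 2 = y 0 ^ 2 + y 1 ^ 2 + y 2 ^ 2 := by
    simp [EuclideanSpace.norm_sq_eq, Fin.sum_univ_three]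
  have hy2 : ‖y‖ * (y 2 / ‖y‖) = y 2 := by
    rcases eq_or_ne ‖y‖ 0 with h | h
    · simp [norm_eq_zero.mp h]
    · exact mul_div_cancel₀ _ h
  rw [Y31, if_pos (Nat.le_add_right k m), Nat.add_sub_cancel_left, mul_assoc, rho,
    sqrt_pow_mul_chebT, ← gegenbauerHomog_mul_sq, hy2, hnorm, Y31Poly]

theorem differentiable_Y31Poly (k m : ℕ) : Differentiable ℝ (Y31Poly k m) := by
  unfold Y31Poly gegenbauerHomog chebyshevHomog
  fun_prop

theorem pd_one_Y31Poly (k m : ℕ) (x : EuclideanSpace ℝ (Fin 3)) :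
    pd 1 (Y31Poly (k + 1) m) x
      = gegenbauerHomogDeriv m ((k + 1 : ℕ) + 1 / 2) (x 2) (x 0 ^ 2 + x 1 ^ 2 + x 2 ^ 2)
          * (2 * x 1 * chebyshevHomog (k + 1) (x 0) (x 1))
        + gegenbauerHomog m ((k + 1 : ℕ) + 1 / 2) (x 2) (x 0 ^ 2 + x 1 ^ 2 + x 2 ^ 2)
          * ((k + 1) * chebyshevHomog k (x 0) (x 1)) := by
  have hq : HasDerivAt (fun s : ℝ => x 0 ^ 2 + s ^ 2 + x 2 ^ 2) (2 * x 1) (x 1) := by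
    simpa using ((hasDerivAt_pow 2 (x 1)).const_add (x 0 ^ 2)).add_const (x 2 ^ 2)
  refine pd_eq_of_hasDerivAt (differentiable_Y31Poly _ _ x) (fun t => ?_)
    ((((hasDerivAt_gegenbauerHomog _ _ _ _).comp (x 1) hq).mul
      (hasDerivAt_chebyshevHomog k (x 0) (x 1))).congr_deriv
        (by rw [Function.comp_apply]; ring))
  simp only [Y31Poly, PiLp.add_apply, PiLp.smul_apply, PiLp.single_apply, Fin.reduceEq, if_true,
    if_false, smul_eq_mul, mul_one, mul_zero, add_zero, Pi.mul_apply, Function.comp_apply]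

theorem mul_Y31_add_two (j m : ℕ) (x : EuclideanSpace ℝ (Fin 3)) :
    (((j + 1 : ℕ) : ℝ) + 1 / 2) * Y31 (j + 2) (j + m) x
      = -(gegenbauerHomogDeriv m ((j + 1 : ℕ) + 1 / 2) (x 2) (x 0 ^ 2 + x 1 ^ 2 + x 2 ^ 2)
          * chebyshevHomog (j + 2) (x 0) (x 1)) := by
  rcases Nat.lt_or_ge m 2 with hm | hm
  · rw [Y31, if_neg (by omega), gegenbauerHomogDeriv_of_le_one (by omega)]
    simp
  · obtain ⟨m, rfl⟩ : ∃ m', m = m' + 2 := ⟨m - 2, by omega⟩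
    rw [show j + (m + 2) = j + 2 + m by omega, Y31_add_eq_Y31Poly, gegenbauerHomogDeriv_add_two,
      Y31Poly, show ((j + 2 : ℕ) : ℝ) + 1 / 2 = (j + 1 : ℕ) + 1 / 2 + 1 by push_cast; ring]
    ring

theorem stmt15_general (n k : ℕ) (hk1 : 1 ≤ k) (hkn : k ≤ n) (x : EuclideanSpace ℝ (Fin 3)) :
    pd (1 : Fin 3) (Y31 k n) x
      = ((n : ℝ) + k) * ((n : ℝ) + k - 1) / (2 * (2 * (k : ℝ) - 1)) * Y31 (k - 1) (n - 1) x
        - ((k : ℝ) + 1 / 2) * Y31 (k + 1) (n - 1) x := by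
  obtain ⟨j, rfl⟩ : ∃ j, k = j + 1 := ⟨k - 1, by omega⟩
  obtain ⟨m, rfl⟩ : ∃ m, n = j + 1 + m := ⟨n - (j + 1), by omega⟩
  have hlam : (1 : ℝ) < (j + 1 : ℕ) + 1 / 2 := by
    push_cast
    linarith [j.cast_nonneg (α := ℝ)]
  have hgeg := gegenbauerHomog_lowering m hlam (x 2) (x 0 ^ 2 + x 1 ^ 2 + x 2 ^ 2)
  have hcheb := chebyshevHomog_add_two j (x 0) (x 1)
  rw [show ((j + 1 : ℕ) : ℝ) + 1 / 2 - 1 = j + 1 / 2 by push_cast; ring] at hgeg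
  rw [show j + 1 + m - 1 = j + m by omega, Y31_add_eq_Y31Poly, pd_one_Y31Poly, Nat.add_sub_cancel,
    Y31_add_eq_Y31Poly, mul_Y31_add_two, Y31Poly]
  push_cast at hgeg ⊢
  linear_combination
    -gegenbauerHomogDeriv m ((j : ℝ) + 1 + 1 / 2) (x 2) (x 0 ^ 2 + x 1 ^ 2 + x 2 ^ 2) * hcheb
      + chebyshevHomog j (x 0) (x 1) * hgeg

/-- `∂₂ Y_{k,1}^n = ((n+k)(n+k-1)/(2(2k-1))) Y_{k-1,1}^{n-1} - (k+1/2) Y_{k+1,1}^{n-1}`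
for `1 ≤ k ≤ n`, with the convention `Y_{k,1}^m = 0` for `k > m`. -/
theorem stmt15 (n k : ℕ) (hk1 : 1 ≤ k) (hkn : k ≤ n) (x : EuclideanSpace ℝ (Fin 3))
    (hx : (x 0) ^ 2 + (x 1) ^ 2 ≠ 0) :
    pd (1 : Fin 3) (Y31 k n) x
      = ((n : ℝ) + k) * ((n : ℝ) + k - 1) / (2 * (2 * (k : ℝ) - 1)) * Y31 (k - 1) (n - 1) x
        - ((k : ℝ) + 1 / 2) * Y31 (k + 1) (n - 1) x :=
  stmt15_general n k hk1 hkn x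
end

section
/- Let d ≥ 3 and let Y' be a harmonic homogeneous polynomial of degree n' in the variables x' = (x₁,…,x_{d−1}). Set λ = n' + (d−2)/2 and define Y(x) = Y'(x') F_m^λ(x) where F_m^λ(x) = ‖x‖^m C_m^λ(x_d/‖x‖). Then Y is a harmonic homogeneous polynomial of degree n' + m in ℝ^d, and ∂_d Y(x) = (m + 2λ − 1) Y'(x') F_{m−1}^λ(x). -/
open scoped BigOperators
open MeasureTheory

/-- `F_m^λ(x) = ‖x‖^m C_m^λ(x_d/‖x‖)` (which extends to a polynomial in `x`);
by convention `F_m^λ = 0` for `m < 0`. -/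
noncomputable def FgZ (d : ℕ) (m : ℤ) (lam : ℝ) (x : EuclideanSpace ℝ (Fin (d + 1))) : ℝ :=
  if 0 ≤ m then ‖x‖ ^ m.toNat * gegenbauer m.toNat lam (x (Fin.last d) / ‖x‖) else 0

/-- restriction of `x ∈ ℝ^{d+1}` to its first `d` coordinates -/
noncomputable def restr (d : ℕ) (x : EuclideanSpace ℝ (Fin (d + 1))) :
    EuclideanSpace ℝ (Fin d) :=
  WithLp.toLp 2 (fun i : Fin d => x i.castSucc)

section basics
variable {D : ℕ} {f g : EuclideanSpace ℝ (Fin D) → ℝ} {x : EuclideanSpace ℝ (Fin D)}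

lemma pd_hasFDerivAt {i : Fin D} {L : EuclideanSpace ℝ (Fin D) →L[ℝ] ℝ}
    (h : HasFDerivAt f L x) : pd i f x = L (EuclideanSpace.single i 1) := by
  rw [pd, h.fderiv]

lemma pd_add (i : Fin D) (hf : DifferentiableAt ℝ f x) (hg : DifferentiableAt ℝ g x) :
    pd i (fun y => f y + g y) x = pd i f x + pd i g x := by
  simp [pd, fderiv_fun_add hf hg]

lemma pd_mul (i : Fin D) (hf : DifferentiableAt ℝ f x) (hg : DifferentiableAt ℝ g x) :
    pd i (fun y => f y * g y) x = pd i f x * g x + f x * pd i g x := by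
  simp [pd, fderiv_fun_mul hf hg]; ring

lemma pd_sum {ι : Type*} (i : Fin D) (s : Finset ι) (A : ι → EuclideanSpace ℝ (Fin D) → ℝ)
    (h : ∀ j ∈ s, DifferentiableAt ℝ (A j) x) :
    pd i (fun y => ∑ j ∈ s, A j y) x = ∑ j ∈ s, pd i (A j) x := by
  simp [pd, fderiv_fun_sum h]

lemma pd_const (i : Fin D) (c : ℝ) : pd i (fun _ => c) x = 0 := by
  simp [pd]

lemma pd_const_mul (i : Fin D) (c : ℝ) (hf : DifferentiableAt ℝ f x) :
    pd i (fun y => c * f y) x = c * pd i f x := by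
  simp [pd, fderiv_const_mul hf]

lemma pd_pow (i : Fin D) (hf : DifferentiableAt ℝ f x) (n : ℕ) :
    pd i (fun y => f y ^ n) x = n * f x ^ (n - 1) * pd i f x := by
  induction n with
  | zero => simpa using pd_const i 1
  | succ n ih =>
    have h1 : pd i (fun y => f y ^ n * f y) x = pd i (fun y => f y ^ n) x * f x + f x ^ n * pd i f x :=
      pd_mul i (hf.pow n) hf
    have h2 : (fun y => f y ^ (n+1)) = fun y => f y ^ n * f y := by
      funext y; rw [pow_succ]
    rw [h2, h1, ih]
    cases n with
    | zero => simp
    | succ k => rw [Nat.succ_sub_one, pow_succ]; push_cast; ring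

lemma pd_coord (i j : Fin D) : pd i (fun y : EuclideanSpace ℝ (Fin D) => y j) x
    = if j = i then 1 else 0 := by
  have h : HasFDerivAt (fun y : EuclideanSpace ℝ (Fin D) => y j)
      (EuclideanSpace.proj j : EuclideanSpace ℝ (Fin D) →L[ℝ] ℝ) x :=
    (EuclideanSpace.proj j : EuclideanSpace ℝ (Fin D) →L[ℝ] ℝ).hasFDerivAt
  rw [pd_hasFDerivAt h]
  simp [PiLp.proj_apply, EuclideanSpace.single_apply]

lemma contDiff_coord (j : Fin D) : ContDiff ℝ (⊤ : ℕ∞) (fun y : EuclideanSpace ℝ (Fin D) => y j) :=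
  (EuclideanSpace.proj j : EuclideanSpace ℝ (Fin D) →L[ℝ] ℝ).contDiff

lemma contDiff_pd (i : Fin D) (hf : ContDiff ℝ (⊤ : ℕ∞) f) : ContDiff ℝ (⊤ : ℕ∞) (pd i f) := by
  have h1 : ContDiff ℝ (⊤ : ℕ∞) (fderiv ℝ f) := hf.fderiv_right (mod_cast le_top)
  exact (ContinuousLinearMap.apply ℝ ℝ (EuclideanSpace.single i (1:ℝ))).contDiff.comp h1

end basics
section qf
variable {d : ℕ}

noncomputable def tc (d : ℕ) (x : EuclideanSpace ℝ (Fin (d+1))) : ℝ := x (Fin.last d)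

noncomputable def Rq (d : ℕ) (x : EuclideanSpace ℝ (Fin (d+1))) : ℝ := ∑ j, x j ^ 2

noncomputable def Qf (d N : ℕ) (c : ℕ → ℝ) (p q : ℕ → ℕ)
    (x : EuclideanSpace ℝ (Fin (d+1))) : ℝ :=
  ∑ k ∈ Finset.range N, c k * tc d x ^ p k * Rq d x ^ q k

lemma contDiff_tc : ContDiff ℝ (⊤ : ℕ∞) (tc d) := contDiff_coord _

lemma contDiff_Rq : ContDiff ℝ (⊤ : ℕ∞) (Rq d) :=
  ContDiff.sum fun j _ => (contDiff_coord j).pow 2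

lemma contDiff_Qf (N : ℕ) (c : ℕ → ℝ) (p q : ℕ → ℕ) : ContDiff ℝ (⊤ : ℕ∞) (Qf d N c p q) :=
  ContDiff.sum fun k _ =>
    ((contDiff_const.mul (contDiff_tc.pow (p k))).mul (contDiff_Rq.pow (q k)))

lemma diff_tc {x : EuclideanSpace ℝ (Fin (d+1))} : DifferentiableAt ℝ (tc d) x :=
  (contDiff_tc.differentiable (by simp)).differentiableAt

lemma diff_Rq {x : EuclideanSpace ℝ (Fin (d+1))} : DifferentiableAt ℝ (Rq d) x :=
  (contDiff_Rq.differentiable (by simp)).differentiableAt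

lemma diff_Qf {N c p q} {x : EuclideanSpace ℝ (Fin (d+1))} :
    DifferentiableAt ℝ (Qf d N c p q) x :=
  ((contDiff_Qf N c p q).differentiable (by simp)).differentiableAt

lemma pd_tc (i : Fin (d+1)) (x : EuclideanSpace ℝ (Fin (d+1))) :
    pd i (tc d) x = if Fin.last d = i then 1 else 0 := pd_coord i (Fin.last d)

lemma pd_Rq (i : Fin (d+1)) (x : EuclideanSpace ℝ (Fin (d+1))) :
    pd i (Rq d) x = 2 * x i := by
  have hdiff : ∀ j : Fin (d+1), DifferentiableAt ℝ (fun y : EuclideanSpace ℝ (Fin (d+1)) => y j) x :=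
    fun j => (EuclideanSpace.proj j : EuclideanSpace ℝ (Fin (d+1)) →L[ℝ] ℝ).differentiableAt
  have hR : Rq d = fun y : EuclideanSpace ℝ (Fin (d+1)) => ∑ j, y j ^ 2 := rfl
  rw [hR]
  rw [pd_sum i Finset.univ (fun j y => y j ^ 2) (fun j _ => (hdiff j).pow 2)]
  have : ∀ j : Fin (d+1), pd i (fun y : EuclideanSpace ℝ (Fin (d+1)) => y j ^ 2) x
      = 2 * x j ^ 1 * (if j = i then 1 else 0) := by
    intro j
    rw [pd_pow i (hdiff j) 2, pd_coord]
    norm_num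
  simp only [this]
  simp [Finset.sum_ite_eq', pow_one]

lemma pd_Qf_term (i : Fin (d+1)) (x : EuclideanSpace ℝ (Fin (d+1))) (ck : ℝ) (pk qk : ℕ) :
    pd i (fun y => ck * tc d y ^ pk * Rq d y ^ qk) x
      = ck * ((pk : ℝ) * tc d x ^ (pk - 1) * (if Fin.last d = i then 1 else 0)) * Rq d x ^ qk
        + ck * tc d x ^ pk * ((qk : ℝ) * Rq d x ^ (qk - 1) * (2 * x i)) := by
  have h1 : DifferentiableAt ℝ (fun y => ck * tc d y ^ pk) x :=
    (differentiableAt_const ck).mul (diff_tc.pow pk)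
  have h2 : DifferentiableAt ℝ (fun y => Rq d y ^ qk) x := diff_Rq.pow qk
  rw [pd_mul i h1 h2, pd_const_mul (f := fun y => tc d y ^ pk) i ck (diff_tc.pow pk), pd_pow i diff_tc pk,
    pd_pow i diff_Rq qk, pd_tc, pd_Rq]

lemma pd_Qf_cs (j : Fin d) (N : ℕ) (c : ℕ → ℝ) (p q : ℕ → ℕ)
    (x : EuclideanSpace ℝ (Fin (d+1))) :
    pd j.castSucc (Qf d N c p q) x
      = x j.castSucc * Qf d N (fun k => 2 * (q k) * c k) p (fun k => q k - 1) x := by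
  have hQ : Qf d N c p q = fun y => ∑ k ∈ Finset.range N, c k * tc d y ^ p k * Rq d y ^ q k := rfl
  rw [hQ, pd_sum _ _ (fun k y => c k * tc d y ^ p k * Rq d y ^ q k) (fun k _ =>
    ((differentiableAt_const (c k)).mul (diff_tc.pow (p k))).mul (diff_Rq.pow (q k)))]
  rw [Qf, Finset.mul_sum]
  refine Finset.sum_congr rfl fun k _ => ?_
  rw [pd_Qf_term, if_neg (Fin.castSucc_lt_last j).ne']
  push_cast
  ring

lemma pd_Qf_last (N : ℕ) (c : ℕ → ℝ) (p q : ℕ → ℕ) (x : EuclideanSpace ℝ (Fin (d+1))) :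
    pd (Fin.last d) (Qf d N c p q) x
      = Qf d N (fun k => (p k : ℝ) * c k) (fun k => p k - 1) q x
        + Qf d N (fun k => 2 * (q k) * c k) (fun k => p k + 1) (fun k => q k - 1) x := by
  have hQ : Qf d N c p q = fun y => ∑ k ∈ Finset.range N, c k * tc d y ^ p k * Rq d y ^ q k := rfl
  rw [hQ, pd_sum _ _ (fun k y => c k * tc d y ^ p k * Rq d y ^ q k) (fun k _ =>
    ((differentiableAt_const (c k)).mul (diff_tc.pow (p k))).mul (diff_Rq.pow (q k)))]
  rw [Qf, Qf, ← Finset.sum_add_distrib]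
  refine Finset.sum_congr rfl fun k _ => ?_
  rw [pd_Qf_term]
  simp only [if_pos rfl]
  have : x (Fin.last d) = tc d x := rfl
  rw [this, pow_succ]
  push_cast
  ring

end qf
section comp
variable {d : ℕ} {x : EuclideanSpace ℝ (Fin (d+1))}

noncomputable def restrL (d : ℕ) : EuclideanSpace ℝ (Fin (d+1)) →L[ℝ] EuclideanSpace ℝ (Fin d) :=
  ((PiLp.continuousLinearEquiv 2 ℝ (fun _ : Fin d => ℝ)).symm.toContinuousLinearMap).comp
    (ContinuousLinearMap.pi (fun i : Fin d =>
      (EuclideanSpace.proj i.castSucc : EuclideanSpace ℝ (Fin (d+1)) →L[ℝ] ℝ)))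

lemma restrL_eq : ⇑(restrL d) = restr d := rfl

lemma restr_smul (c : ℝ) (x : EuclideanSpace ℝ (Fin (d+1))) :
    restr d (c • x) = c • restr d x := (restrL d).map_smul c x

lemma restr_single_cs (j : Fin d) :
    restr d (EuclideanSpace.single j.castSucc 1) = EuclideanSpace.single j 1 := by
  ext i
  show EuclideanSpace.single j.castSucc (1:ℝ) i.castSucc = _
  simp [EuclideanSpace.single_apply, Fin.castSucc_inj]

lemma restr_single_last :
    restr d (EuclideanSpace.single (Fin.last d) 1) = 0 := by
  ext i
  show EuclideanSpace.single (Fin.last d) (1:ℝ) i.castSucc = _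
  simp [EuclideanSpace.single_apply, (Fin.castSucc_lt_last i).ne]

lemma pd_restr (i : Fin (d+1)) (g : EuclideanSpace ℝ (Fin d) → ℝ)
    (hg : DifferentiableAt ℝ g (restr d x)) :
    pd i (fun y => g (restr d y)) x
      = fderiv ℝ g (restr d x) (restr d (EuclideanSpace.single i 1)) := by
  have h0 : (fun y => g (restr d y)) = g ∘ ⇑(restrL d) := rfl
  have h1 : DifferentiableAt ℝ g (restrL d x) := hg
  rw [pd, h0, fderiv_comp x h1 (restrL d).differentiableAt]
  rw [(restrL d).fderiv]
  rfl

lemma pd_restr_cs (j : Fin d) (g : EuclideanSpace ℝ (Fin d) → ℝ)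
    (hg : DifferentiableAt ℝ g (restr d x)) :
    pd j.castSucc (fun y => g (restr d y)) x = pd j g (restr d x) := by
  rw [pd_restr _ g hg, restr_single_cs]; rfl

lemma pd_restr_last (g : EuclideanSpace ℝ (Fin d) → ℝ)
    (hg : DifferentiableAt ℝ g (restr d x)) :
    pd (Fin.last d) (fun y => g (restr d y)) x = 0 := by
  rw [pd_restr _ g hg, restr_single_last, map_zero]

lemma contDiff_comp_restr {g : EuclideanSpace ℝ (Fin d) → ℝ} (hg : ContDiff ℝ (⊤ : ℕ∞) g) :
    ContDiff ℝ (⊤ : ℕ∞) (fun y => g (restr d y)) :=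
  hg.comp (restrL d).contDiff

lemma lap_comp_restr (g : EuclideanSpace ℝ (Fin d) → ℝ) (hg : ContDiff ℝ (⊤ : ℕ∞) g)
    (x : EuclideanSpace ℝ (Fin (d+1))) :
    lap (fun y => g (restr d y)) x = lap g (restr d x) := by
  have hgd : Differentiable ℝ g := hg.differentiable (by simp)
  rw [lap, Fin.sum_univ_castSucc]
  have hlast : pd (Fin.last d) (fun y => g (restr d y)) = fun _ => (0:ℝ) :=
    funext fun y => pd_restr_last g (hgd _)
  have hcs : ∀ j : Fin d, pd j.castSucc (fun y => g (restr d y))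
      = fun y => pd j g (restr d y) :=
    fun j => funext fun y => pd_restr_cs j g (hgd _)
  have h2 : ∀ j : Fin d, pd j.castSucc (pd j.castSucc (fun y => g (restr d y))) x
      = pd j (pd j g) (restr d x) := by
    intro j
    rw [hcs j]
    exact pd_restr_cs j (pd j g) ((contDiff_pd j hg).differentiable (by simp) _)
  rw [hlast, Finset.sum_congr rfl (fun j _ => h2 j)]
  rw [lap]
  simp [pd_const]

lemma lap_mul {f g : EuclideanSpace ℝ (Fin (d+1)) → ℝ} (hf : ContDiff ℝ (⊤ : ℕ∞) f)
    (hg : ContDiff ℝ (⊤ : ℕ∞) g) (x : EuclideanSpace ℝ (Fin (d+1))) :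
    lap (fun y => f y * g y) x
      = lap f x * g x + 2 * ∑ i, pd i f x * pd i g x + f x * lap g x := by
  have hfd : Differentiable ℝ f := hf.differentiable (by simp)
  have hgd : Differentiable ℝ g := hg.differentiable (by simp)
  have h1 : ∀ i : Fin (d+1), pd i (fun y => f y * g y)
      = fun y => pd i f y * g y + f y * pd i g y :=
    fun i => funext fun y => pd_mul i (hfd y) (hgd y)
  have h2 : ∀ i : Fin (d+1), pd i (pd i (fun y => f y * g y)) x
      = pd i (pd i f) x * g x + 2 * (pd i f x * pd i g x) + f x * pd i (pd i g) x := by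
    intro i
    rw [h1 i]
    have d1 : DifferentiableAt ℝ (fun y => pd i f y * g y) x :=
      (((contDiff_pd i hf).differentiable (by simp)) x).mul (hgd x)
    have d2 : DifferentiableAt ℝ (fun y => f y * pd i g y) x :=
      (hfd x).mul (((contDiff_pd i hg).differentiable (by simp)) x)
    rw [pd_add i d1 d2,
      pd_mul i (((contDiff_pd i hf).differentiable (by simp)) x) (hgd x),
      pd_mul i (hfd x) (((contDiff_pd i hg).differentiable (by simp)) x)]
    ring
  rw [lap, Finset.sum_congr rfl (fun i _ => h2 i), Finset.sum_add_distrib,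
    Finset.sum_add_distrib, ← Finset.sum_mul, ← Finset.mul_sum, ← Finset.mul_sum, lap, lap]

lemma euclid_decomp {D : ℕ} (x : EuclideanSpace ℝ (Fin D)) :
    ∑ j, x j • EuclideanSpace.single j (1:ℝ) = x := by
  simpa [EuclideanSpace.basisFun_apply] using
    (EuclideanSpace.basisFun (Fin D) ℝ).toBasis.sum_repr x

lemma euler {d n' : ℕ} {Y' : EuclideanSpace ℝ (Fin d) → ℝ}
    (hs : Differentiable ℝ Y')
    (hhom : ∀ (c : ℝ) (x' : EuclideanSpace ℝ (Fin d)), Y' (c • x') = c ^ n' * Y' x')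
    (x' : EuclideanSpace ℝ (Fin d)) :
    ∑ j, x' j * pd j Y' x' = (n' : ℝ) * Y' x' := by
  have h1 : HasDerivAt (fun c : ℝ => Y' (c • x')) (fderiv ℝ Y' x' x') 1 := by
    have hY : HasFDerivAt Y' (fderiv ℝ Y' x') ((1:ℝ) • x') := by
      rw [one_smul]; exact (hs x').hasFDerivAt
    have hsm : HasDerivAt (fun c : ℝ => c • x') x' 1 := by
      simpa using (hasDerivAt_id (1:ℝ)).smul_const x'
    exact hY.comp_hasDerivAt 1 hsm
  have h3 : (fun c : ℝ => Y' (c • x')) = fun c => c ^ n' * Y' x' :=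
    funext fun c => hhom c x'
  rw [h3] at h1
  have h2 : HasDerivAt (fun c : ℝ => c ^ n' * Y' x')
      ((n' : ℝ) * (1:ℝ) ^ (n' - 1) * Y' x') 1 := (hasDerivAt_pow n' 1).mul_const _
  have h4 : fderiv ℝ Y' x' x' = (n' : ℝ) * Y' x' := by
    have := h1.unique h2
    simpa using this
  calc ∑ j, x' j * pd j Y' x'
      = fderiv ℝ Y' x' (∑ j, x' j • EuclideanSpace.single j 1) := by
        rw [map_sum]
        refine Finset.sum_congr rfl fun j _ => ?_
        rw [(fderiv ℝ Y' x').map_smul]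
        rfl
    _ = (n' : ℝ) * Y' x' := by rw [euclid_decomp x']; exact h4

end comp
section poly
variable {d : ℕ}

lemma poch_zero (a : ℝ) : poch a 0 = 1 := Finset.prod_range_zero _

lemma poch_succ (a : ℝ) (n : ℕ) : poch a (n+1) = poch a n * (a + n) :=
  Finset.prod_range_succ _ _

noncomputable def ac (lam : ℝ) (m k : ℕ) : ℝ :=
  if 2*k ≤ m then
    (-1:ℝ)^k * poch lam (m-k) * 2^(m-2*k)
      / ((Nat.factorial k : ℝ) * (Nat.factorial (m-2*k) : ℝ))
  else 0

noncomputable def Pg (d : ℕ) (lam : ℝ) (m : ℕ) :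
    EuclideanSpace ℝ (Fin (d+1)) → ℝ :=
  Qf d (m+1) (ac lam m) (fun k => m - 2*k) (fun k => k)

lemma norm_sq_Rq (x : EuclideanSpace ℝ (Fin (d+1))) : ‖x‖^2 = Rq d x := by
  rw [EuclideanSpace.norm_eq, Real.sq_sqrt (by positivity)]
  simp [Rq, Real.norm_eq_abs, sq_abs]

lemma FgZ_eq (d m : ℕ) (lam : ℝ) (x : EuclideanSpace ℝ (Fin (d+1))) :
    FgZ d (m : ℤ) lam x = Pg d lam m x := by
  rw [FgZ, if_pos (by positivity), Int.toNat_natCast]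
  by_cases hx : x = (0 : EuclideanSpace ℝ (Fin (d+1)))
  · subst hx
    have ht : (0 : EuclideanSpace ℝ (Fin (d+1))) (Fin.last d) = 0 := rfl
    have hR : Rq d (0 : EuclideanSpace ℝ (Fin (d+1))) = 0 := by simp [Rq]
    cases m with
    | zero => simp [gegenbauer, poch_zero, Pg, Qf, ac, ht, hR]
    | succ m =>
      rw [Pg, Qf]
      rw [Finset.sum_eq_zero]
      · simp
      · intro k hk
        rcases Nat.eq_zero_or_pos k with hk0 | hk0
        · subst hk0
          have : tc d (0 : EuclideanSpace ℝ (Fin (d+1))) = 0 := rfl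
          rw [this]
          rw [zero_pow (by omega)]
          ring
        · rw [hR, zero_pow (by omega)]
          ring
  · have hn : ‖x‖ ≠ 0 := norm_ne_zero_iff.mpr hx
    rw [gegenbauer, Finset.mul_sum, Pg, Qf]
    rw [← Finset.sum_subset (Finset.range_subset_range.mpr (by omega : m/2+1 ≤ m+1))
      (fun k _ hk => by
        have : ¬ (2*k ≤ m) := by
          simp only [Finset.mem_range] at hk ⊢
          omega
        rw [ac, if_neg this]
        ring)]
    refine Finset.sum_congr rfl fun k hk => ?_
    have h2k : 2*k ≤ m := by
      simp only [Finset.mem_range] at hk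
      omega
    rw [ac, if_pos h2k]
    have htc : x (Fin.last d) = tc d x := rfl
    have hsplit : ‖x‖^m = ‖x‖^(m-2*k) * (Rq d x)^k := by
      rw [← norm_sq_Rq, ← pow_mul, ← pow_add]
      congr 1
      omega
    rw [htc, hsplit, mul_pow, div_pow]
    field_simp

lemma Pg_smul (lam : ℝ) (m : ℕ) (c : ℝ) (x : EuclideanSpace ℝ (Fin (d+1))) :
    Pg d lam m (c • x) = c^m * Pg d lam m x := by
  have ht : tc d (c • x) = c * tc d x := rfl
  have hR : Rq d (c • x) = c^2 * Rq d x := by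
    have : ∀ j : Fin (d+1), (c • x) j = c * x j := fun j => rfl
    simp [Rq, this, mul_pow, Finset.mul_sum]
  rw [Pg, Qf, Qf, Finset.mul_sum]
  refine Finset.sum_congr rfl fun k _ => ?_
  by_cases h2k : 2*k ≤ m
  · have hc : c ^ (m - 2*k) * c ^ (2*k) = c ^ m := by
      rw [← pow_add, Nat.sub_add_cancel h2k]
    rw [ht, hR, mul_pow, mul_pow, ← pow_mul]
    linear_combination (ac lam m k * tc d x ^ (m - 2*k) * Rq d x ^ k) * hc
  · rw [ac, if_neg h2k]
    ring

end poly
section sums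

lemma sum_shift_zero (N : ℕ) (f g : ℕ → ℝ) (hf : f 0 = 0) (hg : g N = 0)
    (key : ∀ k < N, f (k+1) + g k = 0) :
    (∑ k ∈ Finset.range (N+1), f k) + (∑ k ∈ Finset.range (N+1), g k) = 0 := by
  rw [Finset.sum_range_succ', hf, add_zero, Finset.sum_range_succ, hg, add_zero,
    ← Finset.sum_add_distrib]
  exact Finset.sum_eq_zero fun k hk => key k (Finset.mem_range.mp hk)

lemma sum_shift_combine (N : ℕ) (f g h : ℕ → ℝ) (hf : f N = 0) (hg : g 0 = 0)
    (key : ∀ k < N, f k + g (k+1) = h k) :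
    (∑ k ∈ Finset.range (N+1), f k) + (∑ k ∈ Finset.range (N+1), g k)
      = ∑ k ∈ Finset.range N, h k := by
  rw [Finset.sum_range_succ, hf, add_zero, Finset.sum_range_succ', hg, add_zero,
    ← Finset.sum_add_distrib]
  exact Finset.sum_congr rfl fun k hk => key k (Finset.mem_range.mp hk)

-- termwise identity for the derivative claim
lemma deriv_key (lam : ℝ) (m k : ℕ) (hk : k < m + 1) (T Rv : ℝ) :
    (↑(m+1-2*k) * ac lam (m+1) k) * T ^ (m+1-2*k-1) * Rv ^ k
      + (2*((k+1:ℕ):ℝ) * ac lam (m+1) (k+1)) * T ^ (m+1-2*(k+1)+1) * Rv ^ ((k+1)-1)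
      = (((m:ℝ)+1) + 2*lam - 1) * (ac lam m k * T ^ (m-2*k) * Rv ^ k) := by
  by_cases hA : 2*k+1 ≤ m
  · -- main case
    obtain ⟨j, rfl⟩ : ∃ j, m = 2*k+1+j := ⟨m-(2*k+1), by omega⟩
    have e1 : 2*k+1+j+1-2*k = j+2 := by omega
    have e2 : j+2-1 = j+1 := by omega
    have e3 : 2*k+1+j+1-2*(k+1) = j := by omega
    have e4 : 2*k+1+j-2*k = j+1 := by omega
    have e5 : 2*k+1+j+1-k = k+j+1+1 := by omega
    have e6 : 2*k+1+j+1-(k+1) = k+j+1 := by omega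
    have e7 : 2*k+1+j-k = k+j+1 := by omega
    have e8 : k+1-1 = k := by omega
    simp only [ac]
    rw [if_pos (show 2*k ≤ 2*k+1+j+1 by omega), if_pos (show 2*(k+1) ≤ 2*k+1+j+1 by omega),
      if_pos (show 2*k ≤ 2*k+1+j by omega)]
    simp only [e1, e2, e3, e4, e5, e6, e7, e8]
    rw [poch_succ lam (k+j+1)]
    have hf1 : (Nat.factorial (j+2) : ℝ) = (j+2) * ((j+1) * Nat.factorial j) := by
      rw [Nat.factorial_succ, Nat.factorial_succ]; push_cast; ring
    have hf2 : (Nat.factorial (j+1) : ℝ) = (j+1) * Nat.factorial j := by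
      rw [Nat.factorial_succ]; push_cast; ring
    have hf3 : (Nat.factorial (k+1) : ℝ) = (k+1) * Nat.factorial k := by
      rw [Nat.factorial_succ]; push_cast; ring
    rw [hf1, hf2, hf3]
    have hk0 : (Nat.factorial k : ℝ) ≠ 0 := Nat.cast_ne_zero.mpr (Nat.factorial_ne_zero k)
    have hj0 : (Nat.factorial j : ℝ) ≠ 0 := Nat.cast_ne_zero.mpr (Nat.factorial_ne_zero j)
    push_cast
    field_simp
    ring
  · by_cases hB : 2*k ≤ m
    · -- boundary case m = 2k
      have hm : m = 2*k := by omega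
      subst hm
      have z1 : ac lam (2*k+1) (k+1) = 0 := by rw [ac, if_neg (by omega)]
      have e1 : 2*k+1-2*k = 1 := by omega
      have e2 : (1:ℕ)-1 = 0 := rfl
      have e3 : 2*k-2*k = 0 := by omega
      have e4 : 2*k+1-k = k+1 := by omega
      have e5 : 2*k-k = k := by omega
      have e8 : k+1-1 = k := by omega
      rw [z1]
      simp only [ac]
      rw [if_pos (show 2*k ≤ 2*k+1 by omega), if_pos (show 2*k ≤ 2*k by omega)]
      simp only [e1, e2, e3, e4, e5, e8]
      rw [poch_succ lam k]
      have hk0 : (Nat.factorial k : ℝ) ≠ 0 := Nat.cast_ne_zero.mpr (Nat.factorial_ne_zero k)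
      simp only [Nat.factorial_zero, Nat.factorial_one]
      push_cast
      field_simp
      ring
    · -- degenerate: everything vanishes
      have h1 : m+1-2*k = 0 := by omega
      have z1 : ac lam (m+1) (k+1) = 0 := by rw [ac, if_neg (by omega)]
      have z2 : ac lam m k = 0 := by rw [ac, if_neg (by omega)]
      rw [h1, z1, z2]
      push_cast
      ring

end sums
section lapPg
variable {d : ℕ}

lemma lap_Pg (d n' m : ℕ) (x : EuclideanSpace ℝ (Fin (d+1))) :
    lap (Pg d ((n':ℝ)+((d:ℝ)-1)/2) m) x
      + 2*(n':ℝ) * Qf d (m+1) (fun k => 2*(k:ℝ)*ac ((n':ℝ)+((d:ℝ)-1)/2) m k)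
          (fun k => m-2*k) (fun k => k-1) x = 0 := by
  set lam : ℝ := (n':ℝ)+((d:ℝ)-1)/2 with hlam
  -- second derivatives in the castSucc directions
  have hcs2 : ∀ j : Fin d, pd j.castSucc (pd j.castSucc (Pg d lam m)) x
      = Qf d (m+1) (fun k => 2*(k:ℝ)*ac lam m k) (fun k => m-2*k) (fun k => k-1) x
        + x j.castSucc * (x j.castSucc *
          Qf d (m+1) (fun k => 2*((k-1:ℕ):ℝ)*(2*(k:ℝ)*ac lam m k))
            (fun k => m-2*k) (fun k => k-1-1) x) := by
    intro j
    have h1 : pd j.castSucc (Pg d lam m)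
        = fun y => y j.castSucc *
            Qf d (m+1) (fun k => 2*(k:ℝ)*ac lam m k) (fun k => m-2*k) (fun k => k-1) y :=
      funext fun y => pd_Qf_cs j (m+1) (ac lam m) (fun k => m-2*k) (fun k => k) y
    rw [h1]
    have hco : DifferentiableAt ℝ (fun y : EuclideanSpace ℝ (Fin (d+1)) => y j.castSucc) x :=
      (EuclideanSpace.proj j.castSucc : EuclideanSpace ℝ (Fin (d+1)) →L[ℝ] ℝ).differentiableAt
    rw [pd_mul _ hco diff_Qf, pd_coord, if_pos rfl,
      pd_Qf_cs j (m+1) (fun k => 2*(k:ℝ)*ac lam m k) (fun k => m-2*k) (fun k => k-1) x]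
    ring
  -- second derivative in the last direction
  have h2 : pd (Fin.last d) (Pg d lam m)
      = fun y => Qf d (m+1) (fun k => ((m-2*k:ℕ):ℝ) * ac lam m k)
            (fun k => m-2*k-1) (fun k => k) y
          + Qf d (m+1) (fun k => 2*(k:ℝ) * ac lam m k) (fun k => m-2*k+1) (fun k => k-1) y :=
    funext fun y => pd_Qf_last (m+1) (ac lam m) (fun k => m-2*k) (fun k => k) y
  have hlast2 : pd (Fin.last d) (pd (Fin.last d) (Pg d lam m)) x
      = (Qf d (m+1) (fun k => ((m-2*k-1:ℕ):ℝ) * (((m-2*k:ℕ):ℝ) * ac lam m k))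
            (fun k => m-2*k-1-1) (fun k => k) x
         + Qf d (m+1) (fun k => 2*(k:ℝ) * (((m-2*k:ℕ):ℝ) * ac lam m k))
            (fun k => m-2*k-1+1) (fun k => k-1) x)
        + (Qf d (m+1) (fun k => ((m-2*k+1:ℕ):ℝ) * (2*(k:ℝ) * ac lam m k))
            (fun k => m-2*k+1-1) (fun k => k-1) x
           + Qf d (m+1) (fun k => 2*((k-1:ℕ):ℝ) * (2*(k:ℝ) * ac lam m k))
            (fun k => m-2*k+1+1) (fun k => k-1-1) x) := by
    rw [h2, pd_add _ diff_Qf diff_Qf,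
      pd_Qf_last (m+1) (fun k => ((m-2*k:ℕ):ℝ) * ac lam m k) (fun k => m-2*k-1) (fun k => k) x,
      pd_Qf_last (m+1) (fun k => 2*(k:ℝ) * ac lam m k) (fun k => m-2*k+1) (fun k => k-1) x]
  -- sum of squares of the first coordinates
  have hsum_sq : ∑ j : Fin d, x j.castSucc^2 = Rq d x - tc d x^2 := by
    have hR : Rq d x = ∑ i : Fin (d+1), x i ^ 2 := rfl
    have ht : x (Fin.last d) = tc d x := rfl
    rw [hR, Fin.sum_univ_castSucc, ht]
    ring
  -- assemble the Laplacian
  have hlap : lap (Pg d lam m) x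
      = (d:ℝ) * Qf d (m+1) (fun k => 2*(k:ℝ)*ac lam m k) (fun k => m-2*k) (fun k => k-1) x
        + (Rq d x - tc d x^2) *
            Qf d (m+1) (fun k => 2*((k-1:ℕ):ℝ)*(2*(k:ℝ)*ac lam m k))
              (fun k => m-2*k) (fun k => k-1-1) x
        + ((Qf d (m+1) (fun k => ((m-2*k-1:ℕ):ℝ) * (((m-2*k:ℕ):ℝ) * ac lam m k))
              (fun k => m-2*k-1-1) (fun k => k) x
            + Qf d (m+1) (fun k => 2*(k:ℝ) * (((m-2*k:ℕ):ℝ) * ac lam m k))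
              (fun k => m-2*k-1+1) (fun k => k-1) x)
          + (Qf d (m+1) (fun k => ((m-2*k+1:ℕ):ℝ) * (2*(k:ℝ) * ac lam m k))
              (fun k => m-2*k+1-1) (fun k => k-1) x
             + Qf d (m+1) (fun k => 2*((k-1:ℕ):ℝ) * (2*(k:ℝ) * ac lam m k))
              (fun k => m-2*k+1+1) (fun k => k-1-1) x)) := by
    rw [lap, Fin.sum_univ_castSucc, hlast2,
      Finset.sum_congr rfl (fun j (_ : j ∈ Finset.univ) => hcs2 j),
      Finset.sum_add_distrib, Finset.sum_const, Finset.card_univ, Fintype.card_fin,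
      nsmul_eq_mul]
    have hrw : ∀ j : Fin d, x j.castSucc * (x j.castSucc *
        Qf d (m+1) (fun k => 2*((k-1:ℕ):ℝ)*(2*(k:ℝ)*ac lam m k))
          (fun k => m-2*k) (fun k => k-1-1) x)
        = x j.castSucc ^ 2 *
        Qf d (m+1) (fun k => 2*((k-1:ℕ):ℝ)*(2*(k:ℝ)*ac lam m k))
          (fun k => m-2*k) (fun k => k-1-1) x := fun j => by ring
    rw [Finset.sum_congr rfl (fun j _ => hrw j), ← Finset.sum_mul, hsum_sq]
  rw [hlap]
  -- merge everything into a single sum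
  have hmerge :
      (d:ℝ) * Qf d (m+1) (fun k => 2*(k:ℝ)*ac lam m k) (fun k => m-2*k) (fun k => k-1) x
        + (Rq d x - tc d x^2) *
            Qf d (m+1) (fun k => 2*((k-1:ℕ):ℝ)*(2*(k:ℝ)*ac lam m k))
              (fun k => m-2*k) (fun k => k-1-1) x
        + ((Qf d (m+1) (fun k => ((m-2*k-1:ℕ):ℝ) * (((m-2*k:ℕ):ℝ) * ac lam m k))
              (fun k => m-2*k-1-1) (fun k => k) x
            + Qf d (m+1) (fun k => 2*(k:ℝ) * (((m-2*k:ℕ):ℝ) * ac lam m k))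
              (fun k => m-2*k-1+1) (fun k => k-1) x)
          + (Qf d (m+1) (fun k => ((m-2*k+1:ℕ):ℝ) * (2*(k:ℝ) * ac lam m k))
              (fun k => m-2*k+1-1) (fun k => k-1) x
             + Qf d (m+1) (fun k => 2*((k-1:ℕ):ℝ) * (2*(k:ℝ) * ac lam m k))
              (fun k => m-2*k+1+1) (fun k => k-1-1) x))
        + 2*(n':ℝ) * Qf d (m+1) (fun k => 2*(k:ℝ)*ac lam m k) (fun k => m-2*k) (fun k => k-1) x
      = (∑ k ∈ Finset.range (m+1),
          (2*(k:ℝ)*ac lam m k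
            * (((d:ℝ)+2*(n':ℝ)) + 2*((k-1:ℕ):ℝ) + ((m-2*k:ℕ):ℝ) + ((m-2*k+1:ℕ):ℝ))
            * tc d x ^ (m-2*k) * Rq d x ^ (k-1)))
        + (∑ k ∈ Finset.range (m+1),
          (((m-2*k-1:ℕ):ℝ) * (((m-2*k:ℕ):ℝ) * ac lam m k))
            * tc d x ^ (m-2*k-1-1) * Rq d x ^ k) := by
    simp only [Qf, Finset.mul_sum, ← Finset.sum_add_distrib]
    refine Finset.sum_congr rfl fun k _ => ?_
    by_cases hM : m - 2*k = 0
    · rcases k with _|_|k' <;>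
        simp only [hM, Nat.zero_sub, Nat.sub_self, Nat.add_sub_cancel,
          show ∀ a:ℕ, a+2-1 = a+1 from fun a => rfl, show ∀ a:ℕ, a+1+1-1-1 = a from fun a => rfl] <;>
        push_cast <;> ring
    · have hE : m-2*k-1+1 = m-2*k := by omega
      rcases k with _|_|k' <;>
        simp only [hE, Nat.zero_sub, Nat.sub_self, Nat.add_sub_cancel,
          show ∀ a:ℕ, a+2-1 = a+1 from fun a => rfl, show ∀ a:ℕ, a+1+1-1-1 = a from fun a => rfl] <;>
        push_cast <;> ring
  rw [hmerge]
  -- now shift the first sum and pair up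
  refine sum_shift_zero m _ _ ?_ ?_ ?_
  · norm_num
  · have h0 : m - 2*m = 0 := by omega
    simp only [h0]
    push_cast
    ring
  · intro k hk
    by_cases hA : 2*(k+1) ≤ m
    · obtain ⟨j, rfl⟩ : ∃ j, m = 2*k+2+j := ⟨m-(2*k+2), by omega⟩
      have e1 : 2*k+2+j-2*(k+1) = j := by omega
      have e2 : 2*k+2+j-2*k = j+2 := by omega
      have e3 : j+2-1 = j+1 := by omega
      have e4 : j+1-1 = j := by omega
      have e5 : 2*k+2+j-(k+1) = k+j+1 := by omega
      have e6 : 2*k+2+j-k = k+j+1+1 := by omega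
      have e8 : k+1-1 = k := by omega
      simp only [e1, e2, e3, e4, e5, e6, e8, ac]
      rw [if_pos (show 2*(k+1) ≤ 2*k+2+j by omega), if_pos (show 2*k ≤ 2*k+2+j by omega)]
      rw [poch_succ lam (k+j+1)]
      have hf1 : (Nat.factorial (j+2) : ℝ) = (j+2) * ((j+1) * Nat.factorial j) := by
        rw [Nat.factorial_succ, Nat.factorial_succ]; push_cast; ring
      have hf3 : (Nat.factorial (k+1) : ℝ) = (k+1) * Nat.factorial k := by
        rw [Nat.factorial_succ]; push_cast; ring
      rw [hf1, hf3]
      have hk0 : (Nat.factorial k : ℝ) ≠ 0 := Nat.cast_ne_zero.mpr (Nat.factorial_ne_zero k)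
      have hj0 : (Nat.factorial j : ℝ) ≠ 0 := Nat.cast_ne_zero.mpr (Nat.factorial_ne_zero j)
      rw [hlam]
      push_cast
      field_simp
      ring
    · have z1 : ac lam m (k+1) = 0 := by rw [ac, if_neg (by omega)]
      rw [z1]
      by_cases hB : 2*k ≤ m
      · have : m - 2*k = 0 ∨ m - 2*k - 1 = 0 := by omega
        rcases this with h|h <;> rw [h] <;> push_cast <;> ring
      · have z2 : ac lam m k = 0 := by rw [ac, if_neg (by omega)]
        rw [z2]
        push_cast
        ring

end lapPg
section final
variable {d : ℕ}

lemma pd_last_Pg (d : ℕ) (lam : ℝ) (m : ℕ) (x : EuclideanSpace ℝ (Fin (d+1))) :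
    pd (Fin.last d) (Pg d lam (m+1)) x = (((m:ℝ)+1) + 2*lam - 1) * Pg d lam m x := by
  have h2 : pd (Fin.last d) (Pg d lam (m+1)) x
      = Qf d (m+2) (fun k => ((m+1-2*k:ℕ):ℝ) * ac lam (m+1) k)
            (fun k => m+1-2*k-1) (fun k => k) x
          + Qf d (m+2) (fun k => 2*(k:ℝ) * ac lam (m+1) k)
            (fun k => m+1-2*k+1) (fun k => k-1) x :=
    pd_Qf_last (m+2) (ac lam (m+1)) (fun k => m+1-2*k) (fun k => k) x
  rw [h2, Qf, Qf, Pg, Qf, Finset.mul_sum]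
  refine sum_shift_combine (m+1) _ _ _ ?_ ?_ ?_
  · have h0 : m+1-2*(m+1) = 0 := by omega
    simp only [h0]
    push_cast
    ring
  · norm_num
  · intro k hk
    exact deriv_key lam m k hk (tc d x) (Rq d x)

lemma pd_last_Pg_zero (lam : ℝ) (x : EuclideanSpace ℝ (Fin (d+1))) :
    pd (Fin.last d) (Pg d lam 0) x = 0 := by
  have h2 : pd (Fin.last d) (Pg d lam 0) x
      = Qf d 1 (fun k => ((0-2*k:ℕ):ℝ) * ac lam 0 k)
            (fun k => 0-2*k-1) (fun k => k) x
          + Qf d 1 (fun k => 2*(k:ℝ) * ac lam 0 k)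
            (fun k => 0-2*k+1) (fun k => k-1) x :=
    pd_Qf_last 1 (ac lam 0) (fun k => 0-2*k) (fun k => k) x
  rw [h2]
  simp [Qf]

end final

/-- If `Y'` is harmonic and homogeneous of degree `n'` in the first `d` variables and
`λ = n' + ((d+1)-2)/2`, then `Y(x) = Y'(x') F_m^λ(x)` is harmonic homogeneous of degree
`n' + m` in `ℝ^{d+1}` and `∂_d Y = (m + 2λ - 1) Y'(x') F_{m-1}^λ(x)`. -/
theorem stmt16 (d : ℕ) (hd : 2 ≤ d) (n' m : ℕ)
    (Y' : EuclideanSpace ℝ (Fin d) → ℝ) (hs : ContDiff ℝ (⊤ : ℕ∞) Y')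
    (hhom : ∀ (c : ℝ) (x' : EuclideanSpace ℝ (Fin d)), Y' (c • x') = c ^ n' * Y' x')
    (hharm : ∀ x', lap Y' x' = 0) :
    (∀ (c : ℝ) (x : EuclideanSpace ℝ (Fin (d + 1))),
        (fun z : EuclideanSpace ℝ (Fin (d + 1)) =>
            Y' (restr d z) * FgZ d (m : ℤ) ((n' : ℝ) + ((d : ℝ) - 1) / 2) z) (c • x)
          = c ^ (n' + m) *
            (fun z : EuclideanSpace ℝ (Fin (d + 1)) =>
                Y' (restr d z) * FgZ d (m : ℤ) ((n' : ℝ) + ((d : ℝ) - 1) / 2) z) x) ∧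
    (∀ x, lap (fun z : EuclideanSpace ℝ (Fin (d + 1)) =>
        Y' (restr d z) * FgZ d (m : ℤ) ((n' : ℝ) + ((d : ℝ) - 1) / 2) z) x = 0) ∧
    (∀ x, pd (Fin.last d) (fun z : EuclideanSpace ℝ (Fin (d + 1)) =>
          Y' (restr d z) * FgZ d (m : ℤ) ((n' : ℝ) + ((d : ℝ) - 1) / 2) z) x
        = ((m : ℝ) + 2 * ((n' : ℝ) + ((d : ℝ) - 1) / 2) - 1) *
            (Y' (restr d x) * FgZ d ((m : ℤ) - 1) ((n' : ℝ) + ((d : ℝ) - 1) / 2) x)) := by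
  have hYc : ContDiff ℝ (⊤ : ℕ∞) (fun z : EuclideanSpace ℝ (Fin (d+1)) => Y' (restr d z)) :=
    contDiff_comp_restr hs
  have hYd : Differentiable ℝ Y' := hs.differentiable (by simp)
  set lam : ℝ := (n':ℝ) + ((d:ℝ)-1)/2 with hlam
  have hFg : ∀ (mm : ℕ), (fun z : EuclideanSpace ℝ (Fin (d + 1)) =>
      Y' (restr d z) * FgZ d (mm : ℤ) lam z)
      = fun z => Y' (restr d z) * Pg d lam mm z :=
    fun mm => funext fun z => by rw [FgZ_eq]
  have hPgc : ∀ mm : ℕ, ContDiff ℝ (⊤ : ℕ∞) (Pg d lam mm) := fun mm => contDiff_Qf _ _ _ _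
  have hPgd : ∀ (mm : ℕ) (x : EuclideanSpace ℝ (Fin (d+1))),
      DifferentiableAt ℝ (Pg d lam mm) x := fun mm x => diff_Qf
  refine ⟨?_, ?_, ?_⟩
  · -- homogeneity
    intro c x
    show Y' (restr d (c • x)) * FgZ d (m : ℤ) lam (c • x)
        = c ^ (n' + m) * (Y' (restr d x) * FgZ d (m : ℤ) lam x)
    rw [FgZ_eq d m lam (c • x), FgZ_eq d m lam x, restr_smul c x, hhom,
      Pg_smul lam m c x, pow_add]
    ring
  · -- harmonicity
    intro x
    rw [hFg m, lap_mul hYc (hPgc m) x]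
    have hYlap : lap (fun z : EuclideanSpace ℝ (Fin (d+1)) => Y' (restr d z)) x = 0 := by
      rw [lap_comp_restr Y' hs x, hharm]
    have hcross : ∑ i, pd i (fun z : EuclideanSpace ℝ (Fin (d+1)) => Y' (restr d z)) x
          * pd i (Pg d lam m) x
        = (n':ℝ) * Y' (restr d x)
          * Qf d (m+1) (fun k => 2*(k:ℝ)*ac lam m k) (fun k => m-2*k) (fun k => k-1) x := by
      rw [Fin.sum_univ_castSucc]
      have hl : pd (Fin.last d) (fun z : EuclideanSpace ℝ (Fin (d+1)) => Y' (restr d z)) x = 0 :=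
        pd_restr_last Y' (hYd _)
      rw [hl, zero_mul, add_zero]
      have hterm : ∀ j : Fin d,
          pd j.castSucc (fun z : EuclideanSpace ℝ (Fin (d+1)) => Y' (restr d z)) x
            * pd j.castSucc (Pg d lam m) x
          = (restr d x j * pd j Y' (restr d x)) *
            Qf d (m+1) (fun k => 2*(k:ℝ)*ac lam m k) (fun k => m-2*k) (fun k => k-1) x := by
        intro j
        have hpd : pd j.castSucc (Pg d lam m) x
            = x j.castSucc *
              Qf d (m+1) (fun k => 2*(k:ℝ)*ac lam m k) (fun k => m-2*k) (fun k => k-1) x :=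
          pd_Qf_cs j (m+1) (ac lam m) (fun k => m-2*k) (fun k => k) x
        rw [pd_restr_cs j Y' (hYd _), hpd]
        have hx : x j.castSucc = restr d x j := rfl
        rw [hx]
        ring
      rw [Finset.sum_congr rfl (fun j _ => hterm j), ← Finset.sum_mul,
        euler hYd hhom (restr d x)]
    rw [hYlap, hcross]
    have hkey := lap_Pg d n' m x
    rw [← hlam] at hkey
    linear_combination Y' (restr d x) * hkey
  · -- the derivative identity
    intro x
    rw [hFg m]
    have hYdiff : DifferentiableAt ℝ
        (fun z : EuclideanSpace ℝ (Fin (d+1)) => Y' (restr d z)) x :=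
      (hYc.differentiable (by simp)) x
    rw [pd_mul _ hYdiff (hPgd m x), pd_restr_last Y' (hYd _), zero_mul, zero_add]
    cases m with
    | zero =>
      rw [pd_last_Pg_zero]
      have : FgZ d ((0:ℕ) - 1 : ℤ) lam x = 0 := by
        rw [FgZ, if_neg (by norm_num)]
      rw [this]
      ring
    | succ mm =>
      rw [pd_last_Pg d lam mm x]
      have hz : ((mm+1:ℕ) : ℤ) - 1 = ((mm : ℕ) : ℤ) := by push_cast; ring
      rw [hz, FgZ_eq d mm lam x]
      push_cast
      ring
end
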